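/- Let M be a map with flag set F and generators s0, s1, s2, and let r0, r1, r2 be the truncation generators on F × {0,1,2}. Suppose M is a 2-orbit map and Tr(M) is a 2-orbit map. Then exactly one of the following holds: (i) M is of type 2 and Tr(M) is of type 2; (ii) M is of type 2_{01} and Tr(M) is of type 2_{0}; (iii) M is of type 2_{2} and Tr(M) is of type 2_{12}. -/

import Mathlib

/-- The automorphism group of a map with generators t0, t1, t2: all permutations of the
flag set commuting with each generator. -/
def mapAut {α : Type*} (t0 t1 t2 : Equiv.Perm α) : Subgroup (Equiv.Perm α) :=
  Subgroup.centralizer {t0, t1, t2}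

/-- A (2-orbit) map with generators t0, t1, t2 is of type 2_I if for every flag x and each
i ∈ {0,1,2}, the flags x and t_i x lie in the same automorphism orbit precisely when i ∈ I. -/
def isOfType2 {α : Type*} (t0 t1 t2 : Equiv.Perm α) (I : Set (Fin 3)) : Prop :=
  ∀ x : α,
    ((∃ γ ∈ mapAut t0 t1 t2, γ x = t0 x) ↔ (0 : Fin 3) ∈ I) ∧
    ((∃ γ ∈ mapAut t0 t1 t2, γ x = t1 x) ↔ (1 : Fin 3) ∈ I) ∧
    ((∃ γ ∈ mapAut t0 t1 t2, γ x = t2 x) ↔ (2 : Fin 3) ∈ I)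

/-!
In a 2-orbit map a generator that commutes with all automorphisms permutes the two orbits, so
whether it keeps a flag in its orbit does not depend on the flag; the type is therefore read off
at a single flag.

An automorphism `γ` of `M` gives the automorphism `γ × id` of `Tr(M)`, so on every layer
`F × {j}` the orbits of `Tr(M)` are unions of orbits of `M`, and `r1`, `r2` show that all layers
split alike. If a layer were a single orbit, each of `r0, r1, r2` would keep some flag, hence every
flag, in its orbit, and `Tr(M)`, being connected, would have one orbit. So each layer splits
exactly as `M` does. Reading `r0` on layers 1 and 0, `r1` on layer 0 and `r2` on layer 1: `r0`
keeps orbits iff `s0` does iff `s1` does, `r1` and `r2` keep orbits iff `s2` does, and `s0`, `s2`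
cannot both keep orbits. The three remaining cases are the three types.
-/

open Equiv Subgroup MulAction

theorem eq_or_eq_of_card_eq_two {β : Type*} (h : Nat.card β = 2) {x y : β} (hxy : x ≠ y)
    (z : β) : z = x ∨ z = y := by
  obtain ⟨w, -, hw⟩ := (Nat.card_eq_two_iff' x).mp h
  by_contra! hz
  exact hz.2 ((hw z hz.1).trans (hw y hxy.symm).symm)

namespace Setoid

variable {α : Type*} {s r : Setoid α}

theorem exists_not_rel_of_card_quotient_eq_two (h : Nat.card (Quotient s) = 2) :
    ∃ u v, ¬ s u v := by
  obtain ⟨X, Y, hXY, -⟩ := Nat.card_eq_two_iff.mp h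
  induction X using Quotient.inductionOn
  induction Y using Quotient.inductionOn
  exact ⟨_, _, fun huv => hXY (Quotient.sound huv)⟩

theorem rel_or_rel_of_card_quotient_eq_two (h : Nat.card (Quotient s) = 2) {u v : α}
    (huv : ¬ s u v) (w : α) : s w u ∨ s w v := by
  have := eq_or_eq_of_card_eq_two h (fun e => huv (Quotient.exact e)) ⟦w⟧
  exact this.imp Quotient.exact Quotient.exact

theorem rel_apply_self_of_mem_closure {T : Set (Perm α)} (hT : ∀ t ∈ T, ∀ x, s (t x) x)
    {g : Perm α} (hg : g ∈ closure T) (x : α) : s (g x) x := by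
  induction hg using closure_induction generalizing x with
  | mem t ht => exact hT t ht x
  | one => exact s.refl x
  | mul g h _ _ hg hh => exact s.trans (hg (h x)) (hh x)
  | inv g _ hg => simpa using s.symm (hg (g⁻¹ x))

theorem rel_of_le_of_rel_of_cover (hle : r ≤ s) {a b : α} (hab : s a b)
    (hcover : ∀ w, r w a ∨ r w b) (x y : α) : s x y := by
  have hxa : ∀ w, s w a := fun w =>
    (hcover w).elim (fun h => hle h) (fun h => s.trans (hle h) (s.symm hab))
  exact s.trans (hxa x) (s.symm (hxa y))

theorem rel_of_le_of_not_rel_of_cover (hle : r ≤ s) {a b : α} (hab : ¬ s a b)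
    (hcover : ∀ w, r w a ∨ r w b) {x y : α} (hxy : s x y) : r x y := by
  rcases hcover x with hx | hx <;> rcases hcover y with hy | hy
  · exact r.trans hx (r.symm hy)
  · exact absurd (s.trans (s.symm (hle hx)) (s.trans hxy (hle hy))) hab
  · exact absurd (s.trans (s.symm (hle hy)) (s.trans (s.symm hxy) (hle hx))) hab
  · exact r.trans hx (r.symm hy)

end Setoid

section AutOrbits

variable {α : Type*} {S : Set (Perm α)}

abbrev autOrbitRel (S : Set (Perm α)) : Setoid α := orbitRel (centralizer S) α

theorem apply_comm_of_mem_centralizer {γ t : Perm α} (hγ : γ ∈ centralizer S) (ht : t ∈ S)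
    (x : α) : γ (t x) = t (γ x) :=
  (DFunLike.congr_fun (mem_centralizer_iff.mp hγ t ht) x).symm

theorem autOrbitRel_iff {x y : α} : autOrbitRel S x y ↔ ∃ γ ∈ centralizer S, γ y = x := by
  simp [orbitRel_apply, mem_orbit_iff, Subgroup.smul_def, Perm.smul_def]

theorem autOrbitRel_apply_apply_iff {t : Perm α} (ht : t ∈ S) {x y : α} :
    autOrbitRel S (t x) (t y) ↔ autOrbitRel S x y := by
  simp only [autOrbitRel_iff]
  refine exists_congr fun γ => and_congr_right fun hγ => ?_
  rw [apply_comm_of_mem_centralizer hγ ht, t.apply_eq_iff_eq]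

theorem autOrbitRel_apply_self_of_card_eq_two
    (h2 : Nat.card (orbitRel.Quotient (centralizer S) α) = 2) {t : Perm α} (ht : t ∈ S) {x : α}
    (hx : autOrbitRel S (t x) x) (y : α) : autOrbitRel S (t y) y := by
  set R := autOrbitRel S
  by_cases hyx : R y x
  · exact R.trans ((autOrbitRel_apply_apply_iff ht).mpr hyx) (R.trans hx (R.symm hyx))
  · refine (R.rel_or_rel_of_card_quotient_eq_two h2 hyx (t y)).resolve_right fun hty => hyx ?_
    exact (autOrbitRel_apply_apply_iff ht).mp (R.trans hty (R.symm hx))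

theorem autOrbitRel_apply_self_iff_of_card_eq_two
    (h2 : Nat.card (orbitRel.Quotient (centralizer S) α) = 2) {t : Perm α} (ht : t ∈ S) (x y : α) :
    autOrbitRel S (t x) x ↔ autOrbitRel S (t y) y :=
  ⟨fun h => autOrbitRel_apply_self_of_card_eq_two h2 ht h y,
    fun h => autOrbitRel_apply_self_of_card_eq_two h2 ht h x⟩

theorem isOfType2_iff_of_card_eq_two {t0 t1 t2 : Perm α} {I : Set (Fin 3)}
    (h2 : Nat.card (orbitRel.Quotient (centralizer {t0, t1, t2}) α) = 2) (x0 x1 x2 : α) :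
    isOfType2 t0 t1 t2 I ↔
      (autOrbitRel {t0, t1, t2} (t0 x0) x0 ↔ (0 : Fin 3) ∈ I) ∧
      (autOrbitRel {t0, t1, t2} (t1 x1) x1 ↔ (1 : Fin 3) ∈ I) ∧
      (autOrbitRel {t0, t1, t2} (t2 x2) x2 ↔ (2 : Fin 3) ∈ I) := by
  have hconst : ∀ t ∈ ({t0, t1, t2} : Set (Perm α)), ∀ (y : α) (c : Prop),
      (∀ x, (autOrbitRel {t0, t1, t2} (t x) x ↔ c)) ↔ (autOrbitRel {t0, t1, t2} (t y) y ↔ c) :=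
    fun t ht y c => ⟨fun h => h y,
      fun h x => (autOrbitRel_apply_self_iff_of_card_eq_two h2 ht x y).trans h⟩
  simp only [isOfType2, mapAut, ← autOrbitRel_iff, forall_and]
  rw [hconst t0 (by simp) x0, hconst t1 (by simp) x1, hconst t2 (by simp) x2]

end AutOrbits

structure IsTruncation {F : Type*} (s0 s1 s2 : Perm F) (r0 r1 r2 : Perm (F × Fin 3)) :
    Prop where
  r0_zero : ∀ Φ, r0 (Φ, 0) = (s1 Φ, 0)
  r0_one : ∀ Φ, r0 (Φ, 1) = (s0 Φ, 1)
  r0_two : ∀ Φ, r0 (Φ, 2) = (s1 Φ, 2)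
  r1_zero : ∀ Φ, r1 (Φ, 0) = (s2 Φ, 0)
  r1_one : ∀ Φ, r1 (Φ, 1) = (Φ, 2)
  r1_two : ∀ Φ, r1 (Φ, 2) = (Φ, 1)
  r2_zero : ∀ Φ, r2 (Φ, 0) = (Φ, 2)
  r2_one : ∀ Φ, r2 (Φ, 1) = (s2 Φ, 1)
  r2_two : ∀ Φ, r2 (Φ, 2) = (Φ, 0)

namespace IsTruncation

variable {F : Type*} {s0 s1 s2 : Perm F} {r0 r1 r2 : Perm (F × Fin 3)}

theorem prodCongr_mem_centralizer (hT : IsTruncation s0 s1 s2 r0 r1 r2) {γ : Perm F}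
    (hγ : γ ∈ centralizer {s0, s1, s2}) :
    γ.prodCongr (Equiv.refl (Fin 3)) ∈ centralizer {r0, r1, r2} := by
  have h0 := apply_comm_of_mem_centralizer hγ (by simp : s0 ∈ {s0, s1, s2})
  have h1 := apply_comm_of_mem_centralizer hγ (by simp : s1 ∈ {s0, s1, s2})
  have h2 := apply_comm_of_mem_centralizer hγ (by simp : s2 ∈ {s0, s1, s2})
  rw [mem_centralizer_iff]
  rintro t (rfl | rfl | rfl) <;> refine Equiv.ext fun ⟨Φ, j⟩ => ?_ <;> fin_cases j <;>
    simp [hT.r0_zero, hT.r0_one, hT.r0_two, hT.r1_zero, hT.r1_one, hT.r1_two, hT.r2_zero,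
      hT.r2_one, hT.r2_two, h0, h1, h2]

theorem autOrbitRel_le_comap (hT : IsTruncation s0 s1 s2 r0 r1 r2) (j : Fin 3) :
    autOrbitRel {s0, s1, s2} ≤ (autOrbitRel {r0, r1, r2}).comap (·, j) := by
  intro x y h
  obtain ⟨γ, hγ, rfl⟩ := autOrbitRel_iff.mp h
  exact autOrbitRel_iff.mpr ⟨_, hT.prodCongr_mem_centralizer hγ, rfl⟩

theorem autOrbitRel_layer_iff_zero (hT : IsTruncation s0 s1 s2 r0 r1 r2) (j : Fin 3) (x y : F) :
    autOrbitRel {r0, r1, r2} (x, j) (y, j) ↔ autOrbitRel {r0, r1, r2} (x, 0) (y, 0) := by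
  have h02 := autOrbitRel_apply_apply_iff (S := {r0, r1, r2}) (by simp : r2 ∈ _)
    (x := (x, 2)) (y := (y, 2))
  have h12 := autOrbitRel_apply_apply_iff (S := {r0, r1, r2}) (by simp : r1 ∈ _)
    (x := (x, 1)) (y := (y, 1))
  rw [hT.r2_two, hT.r2_two] at h02
  rw [hT.r1_one, hT.r1_one] at h12
  fin_cases j
  · rfl
  · exact h12.symm.trans h02.symm
  · exact h02.symm

theorem rel_of_rel_apply_self (hT : IsTruncation s0 s1 s2 r0 r1 r2)
    (htrans : ∀ x y : F, ∃ g ∈ closure ({s0, s1, s2} : Set (Perm F)), g x = y)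
    (s : Setoid (F × Fin 3)) (h0 : ∀ p, s (r0 p) p) (h1 : ∀ p, s (r1 p) p)
    (h2 : ∀ p, s (r2 p) p) (p q : F × Fin 3) : s p q := by
  have hlayer : ∀ x j, s (x, j) (x, 0) := by
    intro x j
    have h02 : s (x, 0) (x, 2) := by simpa [hT.r2_two] using h2 (x, 2)
    have h21 : s (x, 2) (x, 1) := by simpa [hT.r1_one] using h1 (x, 1)
    fin_cases j
    · exact s.refl _
    · exact s.symm (s.trans h02 h21)
    · exact s.symm h02
  have hgen : ∀ t ∈ ({s0, s1, s2} : Set (Perm F)), ∀ x, s.comap (·, 0) (t x) x := by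
    rintro t (rfl | rfl | rfl) x <;> rw [Setoid.comap_rel]
    · have h := h0 (x, 1)
      rw [hT.r0_one] at h
      exact s.trans (s.symm (hlayer _ 1)) (s.trans h (hlayer x 1))
    · simpa [hT.r0_zero] using h0 (x, 0)
    · simpa [hT.r1_zero] using h1 (x, 0)
  obtain ⟨x, i⟩ := p
  obtain ⟨y, j⟩ := q
  obtain ⟨g, hg, rfl⟩ := htrans y x
  exact s.trans (hlayer _ i) (s.trans (Setoid.rel_apply_self_of_mem_closure hgen hg y)
    (s.symm (hlayer y j)))

theorem not_all_generators_rel_apply_self (hT : IsTruncation s0 s1 s2 r0 r1 r2)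
    (htrans : ∀ x y : F, ∃ g ∈ closure ({s0, s1, s2} : Set (Perm F)), g x = y)
    (hTr2 : Nat.card (orbitRel.Quotient (centralizer {r0, r1, r2}) (F × Fin 3)) = 2)
    (p0 p1 p2 : F × Fin 3) :
    ¬ (autOrbitRel {r0, r1, r2} (r0 p0) p0 ∧ autOrbitRel {r0, r1, r2} (r1 p1) p1 ∧
      autOrbitRel {r0, r1, r2} (r2 p2) p2) := by
  rintro ⟨h0, h1, h2⟩
  obtain ⟨u, v, huv⟩ := Setoid.exists_not_rel_of_card_quotient_eq_two hTr2
  exact huv (hT.rel_of_rel_apply_self htrans _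
    (autOrbitRel_apply_self_of_card_eq_two hTr2 (by simp) h0)
    (autOrbitRel_apply_self_of_card_eq_two hTr2 (by simp) h1)
    (autOrbitRel_apply_self_of_card_eq_two hTr2 (by simp) h2) u v)

theorem autOrbitRel_layer_iff (hT : IsTruncation s0 s1 s2 r0 r1 r2)
    (htrans : ∀ x y : F, ∃ g ∈ closure ({s0, s1, s2} : Set (Perm F)), g x = y)
    (hM2 : Nat.card (orbitRel.Quotient (centralizer {s0, s1, s2}) F) = 2)
    (hTr2 : Nat.card (orbitRel.Quotient (centralizer {r0, r1, r2}) (F × Fin 3)) = 2)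
    (j : Fin 3) (x y : F) :
    autOrbitRel {r0, r1, r2} (x, j) (y, j) ↔ autOrbitRel {s0, s1, s2} x y := by
  obtain ⟨a, b, hab⟩ := Setoid.exists_not_rel_of_card_quotient_eq_two hM2
  have hcover := Setoid.rel_or_rel_of_card_quotient_eq_two hM2 hab
  have hsep : ¬ autOrbitRel {r0, r1, r2} (a, 0) (b, 0) := by
    intro h
    have htotal : ∀ j x y, autOrbitRel {r0, r1, r2} (x, j) (y, j) := fun j x y =>
      (hT.autOrbitRel_layer_iff_zero j x y).mpr
        (Setoid.rel_of_le_of_rel_of_cover (hT.autOrbitRel_le_comap 0) h hcover x y)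
    refine hT.not_all_generators_rel_apply_self htrans hTr2 (a, 0) (a, 0) (a, 1) ?_
    rw [hT.r0_zero, hT.r1_zero, hT.r2_one]
    exact ⟨htotal _ _ _, htotal _ _ _, htotal _ _ _⟩
  rw [hT.autOrbitRel_layer_iff_zero]
  exact ⟨Setoid.rel_of_le_of_not_rel_of_cover (hT.autOrbitRel_le_comap 0) hsep hcover,
    fun h => hT.autOrbitRel_le_comap 0 h⟩

end IsTruncation

theorem truncation_of_two_orbit_two_orbit_general
    {F : Type*}
    (s0 s1 s2 : Equiv.Perm F)
    (htrans : ∀ x y : F, ∃ g ∈ Subgroup.closure ({s0, s1, s2} : Set (Equiv.Perm F)), g x = y)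
    (r0 r1 r2 : Equiv.Perm (F × Fin 3))
    (hr0 : ∀ Φ : F, r0 (Φ, 0) = (s1 Φ, 0) ∧ r0 (Φ, 1) = (s0 Φ, 1) ∧ r0 (Φ, 2) = (s1 Φ, 2))
    (hr1 : ∀ Φ : F, r1 (Φ, 0) = (s2 Φ, 0) ∧ r1 (Φ, 1) = (Φ, 2) ∧ r1 (Φ, 2) = (Φ, 1))
    (hr2 : ∀ Φ : F, r2 (Φ, 0) = (Φ, 2) ∧ r2 (Φ, 1) = (s2 Φ, 1) ∧ r2 (Φ, 2) = (Φ, 0))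
    (hM2 : Nat.card (MulAction.orbitRel.Quotient
      (↥(Subgroup.centralizer ({s0, s1, s2} : Set (Equiv.Perm F)))) F) = 2)
    (hTr2 : Nat.card (MulAction.orbitRel.Quotient
      (↥(Subgroup.centralizer ({r0, r1, r2} : Set (Equiv.Perm (F × Fin 3))))) (F × Fin 3)) = 2) :
    ((isOfType2 s0 s1 s2 ∅ ∧ isOfType2 r0 r1 r2 ∅) ∧
      ¬(isOfType2 s0 s1 s2 {0, 1} ∧ isOfType2 r0 r1 r2 {0}) ∧
      ¬(isOfType2 s0 s1 s2 {2} ∧ isOfType2 r0 r1 r2 {1, 2})) ∨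
    (¬(isOfType2 s0 s1 s2 ∅ ∧ isOfType2 r0 r1 r2 ∅) ∧
      (isOfType2 s0 s1 s2 {0, 1} ∧ isOfType2 r0 r1 r2 {0}) ∧
      ¬(isOfType2 s0 s1 s2 {2} ∧ isOfType2 r0 r1 r2 {1, 2})) ∨
    (¬(isOfType2 s0 s1 s2 ∅ ∧ isOfType2 r0 r1 r2 ∅) ∧
      ¬(isOfType2 s0 s1 s2 {0, 1} ∧ isOfType2 r0 r1 r2 {0}) ∧
      (isOfType2 s0 s1 s2 {2} ∧ isOfType2 r0 r1 r2 {1, 2})) := by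
  have hT : IsTruncation s0 s1 s2 r0 r1 r2 :=
    ⟨fun Φ => (hr0 Φ).1, fun Φ => (hr0 Φ).2.1, fun Φ => (hr0 Φ).2.2,
      fun Φ => (hr1 Φ).1, fun Φ => (hr1 Φ).2.1, fun Φ => (hr1 Φ).2.2,
      fun Φ => (hr2 Φ).1, fun Φ => (hr2 Φ).2.1, fun Φ => (hr2 Φ).2.2⟩
  have hlayer := hT.autOrbitRel_layer_iff htrans hM2 hTr2
  obtain ⟨a, -, -⟩ := Setoid.exists_not_rel_of_card_quotient_eq_two hM2
  have hP01 := autOrbitRel_apply_self_iff_of_card_eq_two hTr2 (t := r0) (by simp) (a, 1) (a, 0)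
  have hP02 := hT.not_all_generators_rel_apply_self htrans hTr2 (a, 1) (a, 0) (a, 1)
  rw [hT.r0_one, hT.r0_zero, hlayer, hlayer] at hP01
  rw [hT.r0_one, hT.r1_zero, hT.r2_one, hlayer, hlayer, hlayer] at hP02
  simp only [isOfType2_iff_of_card_eq_two hM2 a a a,
    isOfType2_iff_of_card_eq_two hTr2 (a, 1) (a, 0) (a, 1), hT.r0_one, hT.r1_zero, hT.r2_one,
    hlayer]
  generalize autOrbitRel {s0, s1, s2} (s0 a) a = P0 at *
  generalize autOrbitRel {s0, s1, s2} (s1 a) a = P1 at *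
  generalize autOrbitRel {s0, s1, s2} (s2 a) a = P2 at *
  by_cases h0 : P0 <;> by_cases h2 : P2 <;> simp_all

/-- if M and Tr(M) are both 2-orbit maps, then exactly one of the following
holds: (i) both are of type 2; (ii) M is of type 2_{01} and Tr(M) of type 2_0;
(iii) M is of type 2_2 and Tr(M) of type 2_{12}. -/
theorem truncation_of_two_orbit_two_orbit
    {F : Type*} [Fintype F] [Nonempty F]
    (s0 s1 s2 : Equiv.Perm F)
    (hs0i : s0 * s0 = 1) (hs0f : ∀ x, s0 x ≠ x)
    (hs1i : s1 * s1 = 1) (hs1f : ∀ x, s1 x ≠ x)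
    (hs2i : s2 * s2 = 1) (hs2f : ∀ x, s2 x ≠ x)
    (hcomm : s0 * s2 = s2 * s0)
    (hs02i : (s0 * s2) * (s0 * s2) = 1) (hs02f : ∀ x, (s0 * s2) x ≠ x)
    (htrans : ∀ x y : F, ∃ g ∈ Subgroup.closure ({s0, s1, s2} : Set (Equiv.Perm F)), g x = y)
    (r0 r1 r2 : Equiv.Perm (F × Fin 3))
    (hr0 : ∀ Φ : F, r0 (Φ, 0) = (s1 Φ, 0) ∧ r0 (Φ, 1) = (s0 Φ, 1) ∧ r0 (Φ, 2) = (s1 Φ, 2))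
    (hr1 : ∀ Φ : F, r1 (Φ, 0) = (s2 Φ, 0) ∧ r1 (Φ, 1) = (Φ, 2) ∧ r1 (Φ, 2) = (Φ, 1))
    (hr2 : ∀ Φ : F, r2 (Φ, 0) = (Φ, 2) ∧ r2 (Φ, 1) = (s2 Φ, 1) ∧ r2 (Φ, 2) = (Φ, 0))
    (hM2 : Nat.card (MulAction.orbitRel.Quotient
      (↥(Subgroup.centralizer ({s0, s1, s2} : Set (Equiv.Perm F)))) F) = 2)
    (hTr2 : Nat.card (MulAction.orbitRel.Quotient
      (↥(Subgroup.centralizer ({r0, r1, r2} : Set (Equiv.Perm (F × Fin 3))))) (F × Fin 3)) = 2) :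
    ((isOfType2 s0 s1 s2 ∅ ∧ isOfType2 r0 r1 r2 ∅) ∧
      ¬(isOfType2 s0 s1 s2 {0, 1} ∧ isOfType2 r0 r1 r2 {0}) ∧
      ¬(isOfType2 s0 s1 s2 {2} ∧ isOfType2 r0 r1 r2 {1, 2})) ∨
    (¬(isOfType2 s0 s1 s2 ∅ ∧ isOfType2 r0 r1 r2 ∅) ∧
      (isOfType2 s0 s1 s2 {0, 1} ∧ isOfType2 r0 r1 r2 {0}) ∧
      ¬(isOfType2 s0 s1 s2 {2} ∧ isOfType2 r0 r1 r2 {1, 2})) ∨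
    (¬(isOfType2 s0 s1 s2 ∅ ∧ isOfType2 r0 r1 r2 ∅) ∧
      ¬(isOfType2 s0 s1 s2 {0, 1} ∧ isOfType2 r0 r1 r2 {0}) ∧
      (isOfType2 s0 s1 s2 {2} ∧ isOfType2 r0 r1 r2 {1, 2})) :=
  truncation_of_two_orbit_two_orbit_general s0 s1 s2 htrans r0 r1 r2 hr0 hr1 hr2 hM2 hTr2
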